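/- arXiv:math/0102127 — 6 statements merged into one kernel-verified Lean document; each statement's English description precedes it below -/
import Mathlib

section
/- Let U be a vector space and f_0(y), …, f_n(y) ∈ U[[y, y^{-1}]]. If Σ_{i=0}^{n} f_i(y) Δ^(i)(x,y) = 0 in U[[x, x^{-1}, y, y^{-1}]], then f_i(y) = 0 for all i. Consequently the expression of an element of U[[x,x^{-1},y,y^{-1}]] as a finite sum Σ_i g_i(y) Δ^(i)(x,y) is unique when it exists. -/
/-- Doubly infinite formal series `Σ_{m,n} a(m,n) x^m y^n` with coefficients in `U`,
represented by the coefficient function `(m, n) ↦ a(m,n)`. -/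
abbrev FS (U : Type*) := ℤ → ℤ → U

section Defs

variable {U : Type*} [AddCommGroup U] [Module ℂ U]

/-- Formal partial derivative `∂/∂x`. -/
def dX (f : FS U) : FS U := fun m n => (m + 1) • f (m + 1) n

/-- Formal partial derivative `∂/∂y`. -/
def dY (f : FS U) : FS U := fun m n => (n + 1) • f m (n + 1)

/-- Multiplication by `(x - y)`. -/
def xmy (f : FS U) : FS U := fun m n => f (m - 1) n - f m (n - 1)

/-- `Δ(x,y) = y⁻¹ δ(x/y) = Σ_{m ∈ ℤ} x^m y^{-m-1}`. -/
def Delta0 : FS ℂ := fun m n => if n = -m - 1 then 1 else 0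

/-- `Δ^(k)(x,y) = (∂/∂x)^k (y⁻¹ δ(x/y))`. -/
noncomputable def Dk (k : ℕ) : FS ℂ := dX^[k] Delta0

/-- The product `f(y) · g(x,y)` of a series `f(y) = Σ_j f_j y^j` in `y` alone with a
series `g ∈ ℂ[[x,x⁻¹,y,y⁻¹]]`; well defined (as a genuinely finite sum) whenever each
coefficient of `x^m` in `g` is a monomial in `y`, as is the case for `g = Δ^(k)`. -/
noncomputable def ymul (f : ℤ → U) (g : FS ℂ) : FS U :=
  fun m n => ∑ᶠ j : ℤ, g m (n - j) • f j

/-- The product `f(x) · g(x,y)` of a series `f(x)` in `x` alone with `g`. -/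
noncomputable def xmul (f : ℤ → ℂ) (g : FS ℂ) : FS ℂ :=
  fun m n => ∑ᶠ j : ℤ, f j * g (m - j) n

/-- Formal derivative of a one-variable series `Σ_j f_j y^j`. -/
noncomputable def fder (f : ℤ → ℂ) : ℤ → ℂ := fun j => (j + 1) • f (j + 1)

end Defs

noncomputable def cc (i : ℕ) (m : ℤ) : ℂ := ∏ t ∈ Finset.range i, ((m : ℂ) + t + 1)

lemma Dk_eq (i : ℕ) (m n : ℤ) :
    Dk i m n = if n = -m - i - 1 then cc i m else 0 := by
  induction i generalizing m with
  | zero => simp [Dk, Delta0, cc]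
  | succ i ih =>
    have h : Dk (i+1) m n = (m+1) • Dk i (m+1) n := by
      rw [Dk, Function.iterate_succ_apply']; rfl
    rw [h, ih]
    have hcond : (n = -(m+1) - (i:ℤ) - 1) ↔ (n = -m - ((i+1:ℕ):ℤ) - 1) := by
      push_cast; omega
    have hcc : ((m+1 : ℤ)) • cc i (m+1) = cc (i+1) m := by
      rw [zsmul_eq_mul, cc, cc, Finset.prod_range_succ', mul_comm]
      congr 1
      · exact Finset.prod_congr rfl (fun t _ => by push_cast; ring)
      · push_cast; ring
    split_ifs with h1 h2 h2
    · exact hcc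
    · exact absurd (hcond.mp h1) h2
    · exact absurd (hcond.mpr h2) h1
    · simp

lemma ymul_Dk {U : Type*} [AddCommGroup U] [Module ℂ U] (f : ℤ → U) (i : ℕ) (m n : ℤ) :
    ymul f (Dk i) m n = cc i m • f (n + m + i + 1) := by
  rw [ymul]
  rw [finsum_eq_single (fun j => Dk i m (n - j) • f j) (n + m + i + 1)]
  · rw [Dk_eq]
    simp only [show n - (n + m + i + 1) = -m - i - 1 by ring, if_pos rfl]
    simp
  · intro j hj
    rw [Dk_eq]
    rw [if_neg (by omega)]
    simp

lemma key_lemma {U : Type*} [AddCommGroup U] [Module ℂ U] (N : ℕ) (f : ℕ → ℤ → U)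
    (H : ∀ m p : ℤ, ∑ j ∈ Finset.range (N+1), cc j m • f j (p + m + j + 1) = 0) :
    ∀ i ≤ N, f i = 0 := by
  intro i
  induction i using Nat.strong_induction_on with
  | _ i ih =>
    intro hi
    funext p
    have h := H (-(i:ℤ) - 1) p
    rw [Finset.sum_eq_single i] at h
    · have hne : cc i (-(i:ℤ) - 1) ≠ 0 := by
        rw [cc, Finset.prod_ne_zero_iff]
        intro t ht
        have htlt : t < i := Finset.mem_range.mp ht
        push_cast
        intro hc
        have : (t : ℂ) = (i : ℂ) := by linear_combination hc
        have := Nat.cast_injective (R := ℂ) this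
        omega
      have hp : p + (-(i:ℤ) - 1) + i + 1 = p := by ring
      rw [hp] at h
      rcases smul_eq_zero.mp h with h' | h'
      · exact absurd h' hne
      · exact h'
    · intro j hj hji
      rcases lt_or_gt_of_ne hji with hlt | hgt
      · rw [ih j hlt (by omega), Pi.zero_apply, smul_zero]
      · have : cc j (-(i:ℤ) - 1) = 0 := by
          rw [cc]
          apply Finset.prod_eq_zero (Finset.mem_range.mpr hgt)
          push_cast
          ring
        rw [this, zero_smul]
    · intro hmem
      exact absurd (Finset.mem_range.mpr (by omega)) hmem

/-- linear independence of the `Δ^(i)(x,y)` over series in `y`: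
if `Σ_{i=0}^n f_i(y) Δ^(i)(x,y) = 0` then all `f_i = 0`; consequently expressions
`Σ_i g_i(y) Δ^(i)(x,y)` are unique. -/
theorem stmt4 {U : Type*} [AddCommGroup U] [Module ℂ U] (n : ℕ) :
    (∀ f : ℕ → (ℤ → U),
      (∑ i ∈ Finset.range (n + 1), ymul (f i) (Dk i)) = 0 → ∀ i ≤ n, f i = 0) ∧
    (∀ g h : ℕ → (ℤ → U),
      (∑ i ∈ Finset.range (n + 1), ymul (g i) (Dk i)) =
        (∑ i ∈ Finset.range (n + 1), ymul (h i) (Dk i)) → ∀ i ≤ n, g i = h i) := by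
  have expand : ∀ (f : ℕ → ℤ → U) (m p : ℤ),
      (∑ i ∈ Finset.range (n + 1), ymul (f i) (Dk i)) m p
        = ∑ j ∈ Finset.range (n + 1), cc j m • f j (p + m + j + 1) := by
    intro f m p
    rw [Finset.sum_apply, Finset.sum_apply]
    exact Finset.sum_congr rfl (fun j _ => ymul_Dk (f j) j m p)
  constructor
  · intro f H i hi
    apply key_lemma n f _ i hi
    intro m p
    rw [← expand f m p, H]
    rfl
  · intro g h H i hi
    have h0 : (fun j : ℕ => fun t : ℤ => g j t - h j t) i = 0 := by
      apply key_lemma n _ _ i hi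
      intro m p
      simp only [smul_sub, Finset.sum_sub_distrib]
      rw [← expand g m p, ← expand h m p, H, sub_self]
    funext t
    have := congrFun h0 t
    simp only [Pi.zero_apply] at this
    exact sub_eq_zero.mp this
end

section
/- Let U be a vector space and let f(x,y) be a formal series lying in ℂ((x)) ⊗ U[[y,y^{-1}]] (i.e. formal Laurent series in x, truncated from below, with coefficients in U[[y,y^{-1}]]). If (x-y)^k f(x,y) = 0 for some nonnegative integer k, then f(x,y) = 0. -/
/-- if `f(x,y)` is lower-truncated in `x` (i.e. lies in
`ℂ((x)) ⊗ U[[y,y⁻¹]]`) and `(x-y)^k f(x,y) = 0` for some `k ∈ ℕ`, then `f = 0`. -/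
theorem stmt7 {U : Type*} [AddCommGroup U] [Module ℂ U] (f : FS U)
    (htrunc : ∃ N : ℤ, ∀ m < N, ∀ n : ℤ, f m n = 0)
    (h : ∃ k : ℕ, xmy^[k] f = 0) : f = 0 := by
  obtain ⟨k, hk⟩ := h
  induction k generalizing f with
  | zero => simpa using hk
  | succ k ih =>
    have hxf : xmy f = 0 := by
      apply ih (xmy f) ?_ (by rw [← Function.iterate_succ_apply]; exact hk)
      obtain ⟨N, hN⟩ := htrunc
      refine ⟨N, fun m hm n => ?_⟩
      simp [xmy, hN (m-1) (by omega) n, hN m hm (n-1)]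
    obtain ⟨N, hN⟩ := htrunc
    funext m n
    have key : ∀ j : ℕ, f m n = f (m - j) (n + j) := by
      intro j
      induction j with
      | zero => simp
      | succ j ihj =>
        have h1 := congrFun (congrFun hxf (m - j)) (n + j + 1)
        simp only [xmy, Pi.zero_apply, sub_eq_zero] at h1
        have h2 : n + (j : ℤ) + 1 - 1 = n + j := by ring
        rw [h2] at h1
        push_cast
        rw [show m - ((j : ℤ) + 1) = m - j - 1 by ring,
          show n + ((j : ℤ) + 1) = n + j + 1 by ring, h1]
        exact ihj
    have := key ((m - N).toNat + 1)
    rw [this, hN _ (by omega)]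
    rfl
end

section
/- Let V be a simple vertex operator algebra. Then the center of the algebra (V, *) with a * b = a_{-1}b — that is, { u ∈ V : u_{-1}v = v_{-1}u for all v ∈ V } — equals ℂ·1, the span of the vacuum vector. -/
/-- Integer binomial coefficient `binom(p, i)` for `p ∈ ℤ`, `i ∈ ℕ`. -/
def zchoose (p : ℤ) (i : ℕ) : ℤ :=
  if 0 ≤ p then (p.toNat.choose i : ℤ) else (-1) ^ i * (((i : ℤ) - 1 - p).toNat.choose i : ℤ)

/-- A vertex algebra `(V, Y, 1)` over `ℂ`: the datum of bilinear products
`(a, b) ↦ aₙb = (Y n) a b` for `n ∈ ℤ` (the coefficients of the vertex operator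
`Y(a,x)b = Σₙ aₙb x^{-n-1}`), a vacuum vector `vac = 1`, subject to truncation,
the vacuum property `Y(1,x) = id`, the creation property
`Y(a,x)1 ∈ V[[x]]`, `lim_{x→0} Y(a,x)1 = a`, and the Borcherds (Jacobi) identity. -/
structure VertexAlgebra (V : Type*) [AddCommGroup V] [Module ℂ V] where
  Y : ℤ → V →ₗ[ℂ] V →ₗ[ℂ] V
  vac : V
  trunc : ∀ a b : V, ∃ N : ℤ, ∀ n ≥ N, Y n a b = 0
  vacuum : ∀ (n : ℤ) (b : V), Y n vac b = if n = -1 then b else 0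
  creation_nonneg : ∀ (a : V) (n : ℤ), 0 ≤ n → Y n a vac = 0
  creation : ∀ a : V, Y (-1) a vac = a
  borcherds : ∀ (a b c : V) (p q r : ℤ),
    (∑ᶠ i : ℕ, zchoose p i • Y (p + q - i) (Y (r + i) a b) c) =
    ∑ᶠ i : ℕ, ((-1 : ℤ) ^ i * zchoose r i) •
      (Y (p + r - i) a (Y (q + i) b c)
        - (r.negOnePow : ℤ) • Y (q + r - i) b (Y (p + i) a c))

/-- A vertex operator algebra over `ℂ`: a vertex algebra together with a conformal
vector `ω` whose modes `L(m) = ω_{m+1}` satisfy the Virasoro relations with some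
central charge, an internal `ℤ`-grading `V = ⊕ₙ V₍ₙ₎` by `L(0)`-eigenvalues with
finite-dimensional homogeneous pieces, truncated below, with `1 ∈ V₍₀₎`,
`ω ∈ V₍₂₎`, `aₖ V₍ₙ₎ ⊆ V₍ₘ₊ₙ₋ₖ₋₁₎` for `a ∈ V₍ₘ₎`, and `L(-1)a = a₋₂1`. -/
structure VOA (V : Type*) [AddCommGroup V] [Module ℂ V] extends VertexAlgebra V where
  omega : V
  grade : ℤ → Submodule ℂ V
  internal : DirectSum.IsInternal grade
  findim : ∀ n : ℤ, FiniteDimensional ℂ (grade n)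
  bddBelow : ∃ N : ℤ, ∀ n < N, grade n = ⊥
  vac_mem : vac ∈ grade 0
  omega_mem : omega ∈ grade 2
  L0_grading : ∀ (n : ℤ), ∀ v ∈ grade n, Y 1 omega v = (n : ℂ) • v
  virasoro : ∃ c : ℂ, ∀ (m n : ℤ) (v : V),
    Y (m + 1) omega (Y (n + 1) omega v) - Y (n + 1) omega (Y (m + 1) omega v)
      = (m - n) • Y (m + n + 1) omega v
        + (if m + n = 0 then (((m ^ 3 - m : ℤ) : ℂ) / 12 * c) • v else 0)
  grade_shift : ∀ (m n k : ℤ), ∀ a ∈ grade m, ∀ v ∈ grade n,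
    Y k a v ∈ grade (m + n - k - 1)
  translation : ∀ a : V, Y (-2) a vac = Y 0 omega a

namespace Stmt13Aux

lemma zc_neg_one (i : ℕ) : zchoose (-1) i = (-1) ^ i := by
  simp [zchoose]

lemma zc_zero (i : ℕ) : zchoose 0 i = if i = 0 then 1 else 0 := by
  rcases i with _ | i <;> simp [zchoose]

lemma zc_r0 (r : ℤ) : zchoose r 0 = 1 := by
  unfold zchoose; split <;> simp

lemma zc_neg_two (i : ℕ) : zchoose (-2) i = (-1) ^ i * (i + 1) := by
  have h : ((i : ℤ) - 1 + 2).toNat = i + 1 := by omega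
  simp [zchoose, h, Nat.choose_succ_self_right]

lemma negOnePow_neg_one : ((-1 : ℤ).negOnePow : ℤ) = -1 := by decide
lemma negOnePow_neg_two : ((-2 : ℤ).negOnePow : ℤ) = 1 := by decide

variable {V : Type*} [AddCommGroup V] [Module ℂ V] (W : VOA V)

/-- The translation operator `D = L(-1) = ω₀`. -/
def Dm : Module.End ℂ V := W.Y 0 W.omega

lemma D_vac : Dm W W.vac = 0 := W.creation_nonneg W.omega 0 le_rfl

lemma vac_ne (hnontriv : (⊥ : Submodule ℂ V) ≠ ⊤) : W.vac ≠ 0 := by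
  intro h
  apply hnontriv
  ext x
  simp only [Submodule.mem_bot, Submodule.mem_top, iff_true]
  have := W.creation x
  rw [h] at this
  simpa using this.symm

/-- Commutator-type specialization of Borcherds (r = 0). -/
lemma comm0 (a b c : V) (p q : ℤ) :
    W.Y p a (W.Y q b c) - W.Y q b (W.Y p a c)
      = ∑ᶠ i : ℕ, zchoose p i • W.Y (p + q - i) (W.Y (i : ℤ) a b) c := by
  have h := W.borcherds a b c p q 0
  have h2 : (∑ᶠ i : ℕ, ((-1 : ℤ) ^ i * zchoose 0 i) •
      (W.Y (p + 0 - i) a (W.Y (q + i) b c)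
        - ((0 : ℤ).negOnePow : ℤ) • W.Y (q + 0 - i) b (W.Y (p + i) a c)))
      = W.Y p a (W.Y q b c) - W.Y q b (W.Y p a c) := by
    rw [finsum_eq_single _ 0 (fun i hi => by simp [zc_zero, hi])]
    simp [zc_zero]
  rw [h2] at h
  rw [← h]
  apply finsum_congr
  intro i
  norm_num

/-- `D` is a derivation of all products. -/
lemma deriv (b c : V) (q : ℤ) :
    Dm W (W.Y q b c) = W.Y q (Dm W b) c + W.Y q b (Dm W c) := by
  have h := comm0 W W.omega b c 0 q
  have h2 : (∑ᶠ i : ℕ, zchoose 0 i • W.Y (0 + q - i) (W.Y (i : ℕ) W.omega b) c)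
      = W.Y q (W.Y 0 W.omega b) c := by
    rw [finsum_eq_single _ 0 (fun i hi => by simp [zc_zero, hi])]
    simp [zc_zero]
  rw [h2] at h
  exact sub_eq_iff_eq_add.mp h


/-- `(Dx)ₙ = -n x_{n-1}`. -/
lemma Yd (x c : V) (n : ℤ) : W.Y n (Dm W x) c = (-n : ℤ) • W.Y (n - 1) x c := by
  have h := W.borcherds x W.vac c 0 n (-2)
  have h2 : (∑ᶠ i : ℕ, zchoose 0 i • W.Y (0 + n - i) (W.Y (-2 + i) x W.vac) c)
      = W.Y n (Dm W x) c := by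
    rw [finsum_eq_single _ 0 (fun i hi => by simp [zc_zero, hi])]
    norm_num [zc_zero]
    rw [W.translation x]
    rfl
  rw [h2] at h
  rw [h]
  rcases lt_trichotomy n 0 with hn | hn | hn
  · -- n < 0 : single surviving index i₀ = (-1-n).toNat
    rw [finsum_eq_single _ ((-1 - n).toNat) (fun i hi => by
      have e1 : W.Y (n + i) W.vac c = 0 := by
        rw [W.vacuum, if_neg (by omega)]
      have e2 : W.Y (n + -2 - i) W.vac (W.Y (0 + i) x c) = 0 := by
        rw [W.vacuum, if_neg (by omega)]
      rw [e1, e2]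
      simp)]
    have e1 : W.Y (n + ((-1 - n).toNat : ℤ)) W.vac c = c := by
      rw [W.vacuum, if_pos (by omega)]
    have e2 : W.Y (n + -2 - ((-1 - n).toNat : ℤ)) W.vac (W.Y (0 + ((-1 - n).toNat : ℤ)) x c)
        = 0 := by
      rw [W.vacuum, if_neg (by omega)]
    rw [e1, e2, zc_neg_two, negOnePow_neg_two]
    have e3 : (0 + -2 - ((-1 - n).toNat : ℤ)) = n - 1 := by omega
    rw [e3]
    have e4 : ((-1 : ℤ) ^ ((-1 - n).toNat) * ((-1) ^ ((-1 - n).toNat) * (((-1 - n).toNat : ℤ) + 1)))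
        = -n := by
      rw [← mul_assoc, ← mul_pow]
      simp only [neg_mul_neg, one_mul, one_pow]
      omega
    rw [e4]
    simp
  · -- n = 0 : everything vanishes
    subst hn
    rw [finsum_eq_zero_of_forall_eq_zero (fun i => by
      have e1 : W.Y (0 + (i : ℤ)) W.vac c = 0 := by
        rw [W.vacuum, if_neg (by omega)]
      have e2 : W.Y (0 + -2 - i) W.vac (W.Y (0 + i) x c) = 0 := by
        rw [W.vacuum, if_neg (by omega)]
      rw [e1, e2]
      simp)]
    simp
  · -- n > 0 : single surviving index i₀ = (n-1).toNat
    rw [finsum_eq_single _ ((n - 1).toNat) (fun i hi => by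
      have e1 : W.Y (n + i) W.vac c = 0 := by
        rw [W.vacuum, if_neg (by omega)]
      have e2 : W.Y (n + -2 - i) W.vac (W.Y (0 + i) x c) = 0 := by
        rw [W.vacuum, if_neg (by omega)]
      rw [e1, e2]
      simp)]
    have e1 : W.Y (n + ((n - 1).toNat : ℤ)) W.vac c = 0 := by
      rw [W.vacuum, if_neg (by omega)]
    have e2 : W.Y (n + -2 - ((n - 1).toNat : ℤ)) W.vac (W.Y (0 + ((n - 1).toNat : ℤ)) x c)
        = W.Y (0 + ((n - 1).toNat : ℤ)) x c := by
      rw [W.vacuum, if_pos (by omega)]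
    rw [e1, e2, zc_neg_two, negOnePow_neg_two]
    have e3 : (0 + ((n - 1).toNat : ℤ)) = n - 1 := by omega
    rw [e3]
    have e4 : ((-1 : ℤ) ^ ((n - 1).toNat) * ((-1) ^ ((n - 1).toNat) * (((n - 1).toNat : ℤ) + 1)))
        = n := by
      rw [← mul_assoc, ← mul_pow]
      simp only [neg_mul_neg, one_mul, one_pow]
      omega
    rw [e4]
    simp

/-- `x_{-1-i} 1 = Dⁱ x / i!`. -/
lemma creation_pow (x : V) (i : ℕ) :
    W.Y (-1 - (i : ℤ)) x W.vac = ((i.factorial : ℂ))⁻¹ • ((Dm W) ^ i) x := by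
  induction i with
  | zero => simp [W.creation x]
  | succ i ih =>
    have hd : Dm W (W.Y (-1 - (i : ℤ)) x W.vac) = W.Y (-1 - (i : ℤ)) (Dm W x) W.vac := by
      rw [deriv W x W.vac (-1 - (i : ℤ)), D_vac]
      simp
    have hy := Yd W x W.vac (-1 - (i : ℤ))
    have e1 : (-(-1 - (i : ℤ))) = (i : ℤ) + 1 := by ring
    have e2 : (-1 - (i : ℤ) - 1) = -1 - ((i + 1 : ℕ) : ℤ) := by push_cast; ring
    rw [e1, e2] at hy
    -- hy : Y (-1-i) (Dx) vac = (i+1) • Y (-1-(i+1)) x vac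
    have key : (((i : ℤ) + 1) • W.Y (-1 - ((i + 1 : ℕ) : ℤ)) x W.vac)
        = Dm W (W.Y (-1 - (i : ℤ)) x W.vac) := by rw [hd, hy]
    have hne : (((i : ℂ)) + 1) ≠ 0 := by
      have : (0 : ℝ) < (i : ℝ) + 1 := by positivity
      intro hc
      have := congrArg Complex.re hc
      push_cast at this
      simp at this
      linarith
    have key2 : W.Y (-1 - ((i + 1 : ℕ) : ℤ)) x W.vac
        = (((i : ℂ) + 1))⁻¹ • Dm W (W.Y (-1 - (i : ℤ)) x W.vac) := by
      rw [← key]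
      rw [← Int.cast_smul_eq_zsmul ℂ]
      rw [smul_smul]
      push_cast
      rw [inv_mul_cancel₀ hne, one_smul]
    rw [key2, ih, map_smul]
    rw [smul_smul]
    congr 1
    · rw [Nat.factorial_succ]
      push_cast
      rw [mul_inv]
    · rw [pow_succ']
      rfl

/-- Skew-symmetry specialization of Borcherds (`p = -1, q = 0, c = vac`). -/
lemma skewd (a b : V) (r : ℤ) :
    (∑ᶠ i : ℕ, ((-1 : ℤ) ^ i) • W.Y (-1 - (i : ℤ)) (W.Y (r + i) a b) W.vac)
      = -((r.negOnePow : ℤ)) • W.Y r b a := by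
  have h := W.borcherds a b W.vac (-1) 0 r
  have h2 : (∑ᶠ i : ℕ, ((-1 : ℤ) ^ i * zchoose r i) •
      (W.Y (-1 + r - i) a (W.Y (0 + i) b W.vac)
        - (r.negOnePow : ℤ) • W.Y (0 + r - i) b (W.Y (-1 + i) a W.vac)))
      = -((r.negOnePow : ℤ)) • W.Y r b a := by
    rw [finsum_eq_single _ 0 (fun i hi => by
      have e1 : W.Y (0 + (i : ℤ)) b W.vac = 0 := W.creation_nonneg b _ (by omega)
      have e2 : W.Y (-1 + (i : ℤ)) a W.vac = 0 := W.creation_nonneg a _ (by omega)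
      rw [e1, e2]
      simp)]
    have e1 : W.Y (0 + ((0 : ℕ) : ℤ)) b W.vac = 0 := W.creation_nonneg b _ (by omega)
    have e2 : W.Y (-1 + ((0 : ℕ) : ℤ)) a W.vac = a := by norm_num [W.creation a]
    rw [e1, e2, zc_r0]
    simp
  rw [h2] at h
  rw [← h]
  apply finsum_congr
  intro i
  rw [zc_neg_one]
  norm_num

/-- Commutation of modes with `D`. -/
lemma commD (a w : V) (m : ℤ) :
    W.Y m a (Dm W w) = Dm W (W.Y m a w) + m • W.Y (m - 1) a w := by
  have h := deriv W a w m
  have hy := Yd W a w m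
  rw [hy] at h
  rw [h, neg_smul]
  abel

open DirectSum

lemma decD [DirectSum.Decomposition W.grade] (x : V) (n : ℤ) :
    ((DirectSum.decompose W.grade (Dm W x) n : W.grade n) : V)
      = Dm W ((DirectSum.decompose W.grade x (n - 1) : W.grade (n - 1)) : V) := by
  refine DirectSum.Decomposition.inductionOn W.grade
    (motive := fun x => ((DirectSum.decompose W.grade (Dm W x) n : W.grade n) : V)
      = Dm W ((DirectSum.decompose W.grade x (n - 1) : W.grade (n - 1)) : V)) ?_ ?_ ?_ x
  · simp
  · intro i m
    have hm : (m : V) ∈ W.grade i := m.2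
    have hD : Dm W (m : V) ∈ W.grade (i + 1) := by
      have := W.grade_shift 2 i 0 W.omega W.omega_mem (m : V) hm
      have e : (2 + i - 0 - 1 : ℤ) = i + 1 := by ring
      rw [e] at this
      exact this
    by_cases hn : n = i + 1
    · subst hn
      rw [DirectSum.decompose_of_mem_same _ hD]
      have e : (i + 1 - 1 : ℤ) = i := by ring
      rw [e, DirectSum.decompose_of_mem_same _ hm]
    · rw [DirectSum.decompose_of_mem_ne _ hD (by omega)]
      rw [DirectSum.decompose_of_mem_ne _ hm (show i ≠ n - 1 by omega)]
      simp
  · intro a b ha hb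
    rw [map_add, DirectSum.decompose_add, DirectSum.add_apply, DirectSum.decompose_add,
      DirectSum.add_apply]
    push_cast
    rw [ha, hb, map_add]

lemma all_bot_absurd (hnontriv : (⊥ : Submodule ℂ V) ≠ ⊤) : ∃ k, W.grade k ≠ ⊥ := by
  by_contra h
  push_neg at h
  apply hnontriv
  ext x
  simp only [Submodule.mem_bot, Submodule.mem_top, iff_true]
  letI := W.internal.chooseDecomposition
  refine DirectSum.Decomposition.inductionOn W.grade (motive := fun y => y = (0 : V)) rfl ?_ ?_ x
  · rintro i ⟨y, hy⟩
    rw [h i, Submodule.mem_bot] at hy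
    exact hy
  · rintro a b rfl rfl
    simp

lemma exists_min_grade (hnontriv : (⊥ : Submodule ℂ V) ≠ ⊤) :
    ∃ k₀ : ℤ, W.grade k₀ ≠ ⊥ ∧ ∀ j < k₀, W.grade j = ⊥ := by
  classical
  obtain ⟨N, hN⟩ := W.bddBelow
  obtain ⟨k, hk⟩ := all_bot_absurd W hnontriv
  have hkN : N ≤ k := by
    by_contra h
    exact hk (hN k (by omega))
  have hex : ∃ d : ℕ, W.grade (N + d) ≠ ⊥ := ⟨(k - N).toNat, by
    have : N + ((k - N).toNat : ℤ) = k := by omega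
    rw [this]; exact hk⟩
  refine ⟨N + Nat.find hex, Nat.find_spec hex, ?_⟩
  intro j hj
  by_cases hjN : j < N
  · exact hN j hjN
  · have h1 : j = N + ((j - N).toNat : ℤ) := by omega
    have h2 : (j - N).toNat < Nat.find hex := by omega
    have := Nat.find_min hex h2
    rw [not_not] at this
    rw [h1]
    exact this

lemma modes_vanish (u : V) (hD : Dm W u = 0) (m : ℤ) (hm : m ≠ -1) (c : V) :
    W.Y m u c = 0 := by
  have h := Yd W u c (m + 1)
  rw [hD] at h
  simp only [map_zero, LinearMap.zero_apply] at h
  have h2 : (((-(m + 1) : ℤ) : ℂ)) • W.Y (m + 1 - 1) u c = 0 := by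
    rw [Int.cast_smul_eq_zsmul]
    exact h.symm
  rcases smul_eq_zero.mp h2 with h3 | h3
  · exfalso
    have : ((-(m + 1) : ℤ) : ℂ) ≠ 0 := by
      simp only [ne_eq, Int.cast_eq_zero]
      omega
    exact this h3
  · have e : m + 1 - 1 = m := by ring
    rw [e] at h3
    exact h3

lemma comm_minus_one (u : V) (hD : Dm W u = 0) (q : ℤ) (b c : V) :
    W.Y (-1) u (W.Y q b c) = W.Y q b (W.Y (-1) u c) := by
  have h := comm0 W u b c (-1) q
  rw [finsum_eq_zero_of_forall_eq_zero (fun i => by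
    rw [modes_vanish W u hD (i : ℤ) (by omega) b]
    simp)] at h
  exact sub_eq_zero.mp h

lemma dichotomy
    (hsimple : ∀ I : Submodule ℂ V,
      (∀ (a : V) (n : ℤ), ∀ x ∈ I, W.Y n a x ∈ I) → I = ⊥ ∨ I = ⊤)
    (u : V) (hD : Dm W u = 0) (hne : u ≠ 0) :
    LinearMap.ker (W.Y (-1) u) = ⊥ ∧ LinearMap.range (W.Y (-1) u) = ⊤ := by
  constructor
  · rcases hsimple (LinearMap.ker (W.Y (-1) u)) (fun a n x hx => by
      rw [LinearMap.mem_ker] at hx ⊢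
      rw [comm_minus_one W u hD n a x, hx]
      simp) with h | h
    · exact h
    · exfalso
      have : W.vac ∈ LinearMap.ker (W.Y (-1) u) := by rw [h]; trivial
      rw [LinearMap.mem_ker, W.creation u] at this
      exact hne this
  · rcases hsimple (LinearMap.range (W.Y (-1) u)) (fun a n x hx => by
      obtain ⟨y, rfl⟩ := hx
      exact ⟨W.Y n a y, comm_minus_one W u hD n a y⟩) with h | h
    · exfalso
      have : u ∈ LinearMap.range (W.Y (-1) u) := ⟨W.vac, W.creation u⟩
      rw [h, Submodule.mem_bot] at this
      exact hne this
    · exact h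

lemma kerD_hom (hnontriv : (⊥ : Submodule ℂ V) ≠ ⊤)
    (hsimple : ∀ I : Submodule ℂ V,
      (∀ (a : V) (n : ℤ), ∀ x ∈ I, W.Y n a x ∈ I) → I = ⊥ ∨ I = ⊤)
    (m : ℤ) (u : V) (hu : u ∈ W.grade m) (hD : Dm W u = 0) :
    u ∈ Submodule.span ℂ {W.vac} := by
  classical
  by_cases hne : u = 0
  · rw [hne]; exact Submodule.zero_mem _
  obtain ⟨k₀, hk₀, hmin⟩ := exists_min_grade W hnontriv
  obtain ⟨hker, hrange⟩ := dichotomy W hsimple u hD hne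
  letI := W.internal.chooseDecomposition
  rcases lt_trichotomy m 0 with hm | hm | hm
  · -- m < 0 : impossible
    exfalso
    have hinj : Function.Injective (W.Y (-1) u) := LinearMap.ker_eq_bot.mp hker
    have hyt : ∀ t : ℕ, ((W.Y (-1) u) ^ t) W.vac ∈ W.grade (t * m)
        ∧ ((W.Y (-1) u) ^ t) W.vac ≠ 0 := by
      intro t
      induction t with
      | zero => exact ⟨by simpa using W.vac_mem, by simpa using vac_ne W hnontriv⟩
      | succ t ih =>
        constructor
        · rw [pow_succ', Module.End.mul_apply]
          have := W.grade_shift m (t * m) (-1) u hu _ ih.1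
          have e : m + (t : ℤ) * m - (-1) - 1 = ((t : ℕ) + 1 : ℕ) * m := by push_cast; ring
          rw [e] at this
          exact this
        · rw [pow_succ', Module.End.mul_apply]
          intro hc
          exact ih.2 (hinj (by rw [hc, map_zero]))
    obtain ⟨N, hN⟩ := W.bddBelow
    set t := N.natAbs + 1 with ht
    have h1 : (t : ℤ) * m ≤ (t : ℤ) * (-1) := by
      apply mul_le_mul_of_nonneg_left (by omega) (by positivity)
    have h2 : ((t : ℕ) : ℤ) * m < N := by
      rw [mul_neg_one] at h1
      omega
    have := hN _ h2
    have h3 := (hyt t).1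
    rw [this, Submodule.mem_bot] at h3
    exact (hyt t).2 h3
  · -- m = 0 : eigenvalue argument
    letI := W.findim k₀
    have hnt : Nontrivial ↥(W.grade k₀) := Submodule.nontrivial_iff_ne_bot.mpr hk₀
    have hpres : ∀ x ∈ W.grade k₀, W.Y (-1) u x ∈ W.grade k₀ := by
      intro x hx
      have := W.grade_shift m k₀ (-1) u hu x hx
      have e : m + k₀ - (-1) - 1 = k₀ := by omega
      rw [e] at this
      exact this
    set e : Module.End ℂ ↥(W.grade k₀) := (W.Y (-1) u).restrict hpres with he
    obtain ⟨μ, hμ⟩ := Module.End.exists_eigenvalue e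
    obtain ⟨x, hx⟩ := hμ.exists_hasEigenvector
    have hxeq : W.Y (-1) u (x : V) = μ • (x : V) := by
      have := congrArg (Subtype.val) hx.apply_eq_smul
      simpa [he, LinearMap.restrict_apply] using this
    by_cases h0 : u - μ • W.vac = 0
    · rw [Submodule.mem_span_singleton]
      exact ⟨μ, by linear_combination (norm := abel) -h0⟩
    · exfalso
      have hD' : Dm W (u - μ • W.vac) = 0 := by
        rw [map_sub, map_smul, hD, D_vac]
        simp
      have hker' := (dichotomy W hsimple _ hD' h0).1
      have hxin : (x : V) ∈ LinearMap.ker (W.Y (-1) (u - μ • W.vac)) := by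
        rw [LinearMap.mem_ker, map_sub, map_smul, LinearMap.sub_apply, LinearMap.smul_apply]
        rw [hxeq, W.vacuum, if_pos rfl]
        simp
      rw [hker', Submodule.mem_bot, Submodule.coe_eq_zero] at hxin
      exact hx.2 hxin
  · -- m > 0 : impossible
    exfalso
    obtain ⟨x, hxmem, hxne⟩ := (Submodule.ne_bot_iff _).mp hk₀
    have hcomp : ∀ v : V,
        ((DirectSum.decompose W.grade (W.Y (-1) u v) k₀ : W.grade k₀) : V) = 0 := by
      intro v
      refine DirectSum.Decomposition.inductionOn W.grade
        (motive := fun v => ((DirectSum.decompose W.grade (W.Y (-1) u v) k₀ : W.grade k₀) : V) = 0)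
        ?_ ?_ ?_ v
      · simp
      · rintro i ⟨y, hy⟩
        show ((DirectSum.decompose W.grade (W.Y (-1) u y) k₀ : W.grade k₀) : V) = 0
        by_cases hik : i < k₀
        · have : y = 0 := by
            have h := hmin i hik
            rw [h, Submodule.mem_bot] at hy
            exact hy
          rw [this]
          simp
        · have hmem : W.Y (-1) u y ∈ W.grade (m + i) := by
            have := W.grade_shift m i (-1) u hu y hy
            have e : m + i - (-1) - 1 = m + i := by ring
            rw [e] at this
            exact this
          rw [DirectSum.decompose_of_mem_ne _ hmem (by omega)]
      · intro a b ha hb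
        rw [map_add, DirectSum.decompose_add, DirectSum.add_apply]
        push_cast
        rw [ha, hb, add_zero]
    obtain ⟨v, hv⟩ := LinearMap.range_eq_top.mp hrange x
    have : x = 0 := by
      rw [← DirectSum.decompose_of_mem_same W.grade hxmem, ← hv]
      exact hcomp v
    exact hxne this

lemma kerD_span (hnontriv : (⊥ : Submodule ℂ V) ≠ ⊤)
    (hsimple : ∀ I : Submodule ℂ V,
      (∀ (a : V) (n : ℤ), ∀ x ∈ I, W.Y n a x ∈ I) → I = ⊥ ∨ I = ⊤)
    (u : V) (hD : Dm W u = 0) : u ∈ Submodule.span ℂ {W.vac} := by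
  classical
  letI := W.internal.chooseDecomposition
  have hcomp : ∀ n : ℤ, ((DirectSum.decompose W.grade u n : W.grade n) : V)
      ∈ Submodule.span ℂ {W.vac} := by
    intro n
    refine kerD_hom W hnontriv hsimple n _ (DirectSum.decompose W.grade u n).2 ?_
    have h := decD W u (n + 1)
    have e : n + 1 - 1 = n := by ring
    rw [e, hD] at h
    rw [← h]
    simp
  rw [← DirectSum.sum_support_decompose W.grade u]
  exact Submodule.sum_mem _ (fun i _ => hcomp i)

lemma D_eq_smul_vac (hnontriv : (⊥ : Submodule ℂ V) ≠ ⊤) (z : V) (c : ℂ)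
    (h : Dm W z = c • W.vac) : c = 0 := by
  classical
  by_contra hc
  letI := W.internal.chooseDecomposition
  set z' : V := ((DirectSum.decompose W.grade z (-1) : W.grade (-1)) : V) with hz'def
  have hz'mem : z' ∈ W.grade (-1) := (DirectSum.decompose W.grade z (-1)).2
  have hz' : Dm W z' = c • W.vac := by
    have hd := decD W z 0
    have e : (0 : ℤ) - 1 = -1 := by ring
    rw [e] at hd
    rw [← hd, h, DirectSum.decompose_of_mem_same W.grade
      (Submodule.smul_mem _ c W.vac_mem)]
  set y : ℕ → V := fun t => ((W.Y (-1) z') ^ t) W.vac with hydef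
  have hy0 : y 0 = W.vac := by simp [hydef]
  have hysucc : ∀ t : ℕ, y (t + 1) = W.Y (-1) z' (y t) := by
    intro t
    rw [hydef]
    simp only [pow_succ', Module.End.mul_apply]
  have hDy : ∀ t : ℕ, Dm W (y (t + 1)) = ((t : ℂ) + 1) • (c • y t) := by
    intro t
    induction t with
    | zero =>
      rw [hysucc 0, hy0, deriv, hz', D_vac, map_zero]
      simp only [map_smul, LinearMap.smul_apply, W.vacuum, if_pos rfl]
      simp
    | succ t ih =>
      rw [hysucc (t + 1), deriv, hz', ih]
      simp only [map_smul, LinearMap.smul_apply, W.vacuum, if_pos rfl]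
      rw [← hysucc t]
      push_cast
      match_scalars <;> ring
  have hynz : ∀ t : ℕ, y t ≠ 0 := by
    intro t
    induction t with
    | zero => rw [hy0]; exact vac_ne W hnontriv
    | succ t ih =>
      intro hzero
      have h0 : ((t : ℂ) + 1) • (c • y t) = 0 := by rw [← hDy t, hzero, map_zero]
      rcases smul_eq_zero.mp h0 with h1 | h1
      · have : ((t : ℂ) + 1) ≠ 0 := by
          exact_mod_cast Nat.cast_add_one_ne_zero (R := ℂ) t
        exact this h1
      · rcases smul_eq_zero.mp h1 with h2 | h2
        · exact hc h2
        · exact ih h2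
  have hymem : ∀ t : ℕ, y t ∈ W.grade (-(t : ℤ)) := by
    intro t
    induction t with
    | zero => rw [hy0]; simpa using W.vac_mem
    | succ t ih =>
      rw [hysucc t]
      have := W.grade_shift (-1) (-(t : ℤ)) (-1) z' hz'mem _ ih
      have e : (-1 : ℤ) + -(t : ℤ) - (-1) - 1 = -((t : ℕ) + 1 : ℕ) := by push_cast; ring
      rw [e] at this
      exact this
  obtain ⟨N, hN⟩ := W.bddBelow
  set t := N.natAbs + 1 with ht
  have h2 : (-(t : ℤ)) < N := by omega
  have h3 := hymem t
  rw [hN _ h2, Submodule.mem_bot] at h3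
  exact hynz t h3

lemma D_mem_span (hnontriv : (⊥ : Submodule ℂ V) ≠ ⊤)
    (hsimple : ∀ I : Submodule ℂ V,
      (∀ (a : V) (n : ℤ), ∀ x ∈ I, W.Y n a x ∈ I) → I = ⊥ ∨ I = ⊤)
    (x : V) (h : Dm W x ∈ Submodule.span ℂ {W.vac}) :
    x ∈ Submodule.span ℂ {W.vac} := by
  obtain ⟨c, hc⟩ := Submodule.mem_span_singleton.mp h
  have hc0 : c = 0 := D_eq_smul_vac W hnontriv x c hc.symm
  rw [hc0] at hc
  simp only [zero_smul] at hc
  exact kerD_span W hnontriv hsimple x hc.symm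

lemma pow_mem_span (hnontriv : (⊥ : Submodule ℂ V) ≠ ⊤)
    (hsimple : ∀ I : Submodule ℂ V,
      (∀ (a : V) (n : ℤ), ∀ x ∈ I, W.Y n a x ∈ I) → I = ⊥ ∨ I = ⊤)
    (i : ℕ) : ∀ x : V, ((Dm W) ^ i) x ∈ Submodule.span ℂ {W.vac} →
      x ∈ Submodule.span ℂ {W.vac} := by
  induction i with
  | zero => intro x h; simpa using h
  | succ i ih =>
    intro x h
    rw [pow_succ, Module.End.mul_apply] at h
    exact D_mem_span W hnontriv hsimple x (ih _ h)

/-- The Cauchy-type coefficient matrix is nonsingular. -/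
lemma cauchy_det_ne_zero (J : ℕ) :
    (Matrix.of fun (k j : Fin J) => ((-1 : ℂ) ^ ((j : ℕ) + 1) * (((j : ℕ).factorial : ℂ))⁻¹ *
      ((((j : ℕ) : ℂ)) + 1 + (((k : ℕ) : ℂ)))⁻¹)).det ≠ 0 := by
  classical
  set A : Matrix (Fin J) (Fin J) ℂ :=
    Matrix.of fun (k j : Fin J) => ((-1 : ℂ) ^ ((j : ℕ) + 1) * (((j : ℕ).factorial : ℂ))⁻¹ *
      ((((j : ℕ) : ℂ)) + 1 + (((k : ℕ) : ℂ)))⁻¹) with hA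
  intro hdet
  obtain ⟨v, hvne, hv⟩ := Matrix.exists_mulVec_eq_zero_iff.mpr hdet
  set a : Fin J → ℂ := fun j => (-1 : ℂ) ^ ((j : ℕ) + 1) * (((j : ℕ).factorial : ℂ))⁻¹ * v j
    with ha
  set p : Polynomial ℂ := ∑ j : Fin J, Polynomial.C (a j) *
      ∏ t ∈ Finset.univ.erase j, (Polynomial.X + Polynomial.C ((((t : ℕ) : ℂ)) + 1)) with hp
  have hJ : 0 < J := by
    rcases Nat.eq_zero_or_pos J with h | h
    · exfalso
      apply hvne
      funext i
      exact absurd i.2 (by omega)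
    · exact h
  have heval : ∀ k : Fin J, p.eval (((k : ℕ) : ℂ)) = 0 := by
    intro k
    have hmv := congrFun hv k
    simp only [Matrix.mulVec, dotProduct, Pi.zero_apply] at hmv
    have hterm : ∀ j : Fin J,
        a j * (∏ t ∈ Finset.univ.erase j, ((((k : ℕ) : ℂ)) + ((((t : ℕ) : ℂ)) + 1)))
        = (∏ t : Fin J, ((((k : ℕ) : ℂ)) + ((((t : ℕ) : ℂ)) + 1))) * (A k j * v j) := by
      intro j
      have hne : ((((k : ℕ) : ℂ)) + ((((j : ℕ) : ℂ)) + 1)) ≠ 0 := by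
        have h1 : (((k : ℕ) : ℂ)) + ((((j : ℕ) : ℂ)) + 1) = (((k : ℕ) + ((j : ℕ) + 1) : ℕ) : ℂ) := by
          push_cast; ring
        rw [h1]
        exact Nat.cast_ne_zero.mpr (by omega)
      rw [← Finset.mul_prod_erase Finset.univ _ (Finset.mem_univ j)]
      rw [hA, ha]
      simp only [Matrix.of_apply]
      have hfac : (((j : ℕ).factorial : ℂ)) ≠ 0 := Nat.cast_ne_zero.mpr (j : ℕ).factorial_ne_zero
      have hne' : ((((j : ℕ) : ℂ)) + 1 + (((k : ℕ) : ℂ))) ≠ 0 := by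
        intro hc
        exact hne (by linear_combination hc)
      generalize (∏ t ∈ Finset.univ.erase j, ((((k : ℕ) : ℂ)) + ((((t : ℕ) : ℂ)) + 1))) = P
      field_simp
      ring
    rw [hp]
    rw [Polynomial.eval_finset_sum]
    simp only [Polynomial.eval_mul, Polynomial.eval_C, Polynomial.eval_prod,
      Polynomial.eval_add, Polynomial.eval_X]
    rw [Finset.sum_congr rfl (fun j _ => hterm j), ← Finset.mul_sum, hmv, mul_zero]
  have hdeg : p.natDegree < J := by
    have hle : p.natDegree ≤ J - 1 := by
      apply Polynomial.natDegree_sum_le_of_forall_le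
      intro j _
      refine le_trans (Polynomial.natDegree_mul_le) ?_
      rw [Polynomial.natDegree_C]
      rw [zero_add]
      refine le_trans (Polynomial.natDegree_prod_le _ _) ?_
      have : ∀ t ∈ Finset.univ.erase j,
          (Polynomial.X + Polynomial.C ((((t : ℕ) : ℂ)) + 1)).natDegree = 1 := by
        intro t _
        exact Polynomial.natDegree_X_add_C _
      rw [Finset.sum_congr rfl this]
      simp [Finset.card_erase_of_mem]
    omega
  have hinj : Function.Injective (fun k : Fin J => ((k : ℕ) : ℂ)) := by
    intro x y hxy
    exact Fin.val_injective (Nat.cast_injective hxy)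
  have hp0 : p = 0 := Polynomial.eq_zero_of_natDegree_lt_card_of_eval_eq_zero p hinj heval
    (by rwa [Fintype.card_fin])
  apply hvne
  funext j
  have he : p.eval (-((((j : ℕ) : ℂ)) + 1)) = 0 := by rw [hp0, Polynomial.eval_zero]
  rw [hp, Polynomial.eval_finset_sum] at he
  simp only [Polynomial.eval_mul, Polynomial.eval_C, Polynomial.eval_prod,
    Polynomial.eval_add, Polynomial.eval_X] at he
  rw [Finset.sum_eq_single j (fun j' _ hj' => by
    apply mul_eq_zero_of_right
    refine Finset.prod_eq_zero (Finset.mem_erase.mpr ⟨hj'.symm, Finset.mem_univ j⟩) ?_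
    ring) (fun h => absurd (Finset.mem_univ j) h)] at he
  have hprod : (∏ t ∈ Finset.univ.erase j,
      (-((((j : ℕ) : ℂ)) + 1) + ((((t : ℕ) : ℂ)) + 1))) ≠ 0 := by
    apply Finset.prod_ne_zero_iff.mpr
    intro t ht
    have htj : t ≠ j := (Finset.mem_erase.mp ht).1
    have : (((t : ℕ) : ℂ)) ≠ (((j : ℕ) : ℂ)) := fun hc => htj (Fin.val_injective
      (Nat.cast_injective hc))
    intro hc
    apply this
    linear_combination hc
  have haj : a j = 0 := by
    rcases mul_eq_zero.mp he with h | h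
    · exact h
    · exact absurd h hprod
  rw [ha] at haj
  rcases mul_eq_zero.mp haj with h | h
  · exfalso
    rcases mul_eq_zero.mp h with h1 | h1
    · exact pow_ne_zero _ (by norm_num) h1
    · exact (inv_ne_zero (Nat.cast_ne_zero.mpr (j : ℕ).factorial_ne_zero)) h1
  · exact h

/-- From the Cauchy relations, each vector lies in the submodule. -/
lemma cauchy_mem {J : ℕ} (S : Submodule ℂ V) (χ : Fin J → V)
    (h : ∀ k : Fin J, (∑ j : Fin J, ((-1 : ℂ) ^ ((j : ℕ) + 1) * (((j : ℕ).factorial : ℂ))⁻¹ *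
        ((((j : ℕ) : ℂ)) + 1 + (((k : ℕ) : ℂ)))⁻¹) • χ j) ∈ S) :
    ∀ j, χ j ∈ S := by
  classical
  set A : Matrix (Fin J) (Fin J) ℂ :=
    Matrix.of fun (k j : Fin J) => ((-1 : ℂ) ^ ((j : ℕ) + 1) * (((j : ℕ).factorial : ℂ))⁻¹ *
      ((((j : ℕ) : ℂ)) + 1 + (((k : ℕ) : ℂ)))⁻¹) with hA
  have hmul := Matrix.nonsing_inv_mul A (Ne.isUnit (cauchy_det_ne_zero J))
  intro j
  have hrep : χ j = ∑ k : Fin J, (A⁻¹ j k) • (∑ l : Fin J, A k l • χ l) := by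
    have e1 : ∀ k : Fin J, (A⁻¹ j k) • (∑ l : Fin J, A k l • χ l)
        = ∑ l : Fin J, (A⁻¹ j k * A k l) • χ l := by
      intro k
      rw [Finset.smul_sum]
      exact Finset.sum_congr rfl (fun l _ => by rw [smul_smul])
    rw [Finset.sum_congr rfl (fun k _ => e1 k), Finset.sum_comm]
    have e2 : ∀ l : Fin J, (∑ k : Fin J, (A⁻¹ j k * A k l) • χ l)
        = ((A⁻¹ * A) j l) • χ l := by
      intro l
      rw [Matrix.mul_apply, ← Finset.sum_smul]
    rw [Finset.sum_congr rfl (fun l _ => e2 l), hmul]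
    simp [Matrix.one_apply]
  rw [hrep]
  exact Submodule.sum_mem _ (fun k _ => Submodule.smul_mem _ _ (h k))

/-- Coefficients of the iterated relations. -/
noncomputable def cf (k i : ℕ) : ℂ :=
  (-1 : ℂ) ^ (i + 1) * ((i.factorial : ℂ))⁻¹ * (((i : ℂ)) + 1 + ((k : ℂ)))⁻¹

lemma cf_rec (k t : ℕ) : cf k (t + 1) * (((t : ℂ)) + 1) = -cf (k + 1) t := by
  unfold cf
  have h1 : ((t + 1 : ℕ).factorial : ℂ) = (t.factorial : ℂ) * ((t : ℂ) + 1) := by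
    rw [Nat.factorial_succ]
    push_cast
    ring
  have h2 : ((t : ℂ) + 1) ≠ 0 := by exact_mod_cast Nat.cast_add_one_ne_zero (R := ℂ) t
  have h6 : (((t + 1 : ℕ) : ℂ) + 1 + ((k : ℂ))) = (((t : ℕ) : ℂ) + 1 + ((k + 1 : ℕ) : ℂ)) := by
    push_cast; ring
  rw [h6, h1, mul_inv]
  have key := inv_mul_cancel₀ h2
  linear_combination (-(-1 : ℂ) ^ (t + 1) * ((t.factorial : ℂ))⁻¹ *
    ((((t : ℕ) : ℂ) + 1 + ((k + 1 : ℕ) : ℂ)))⁻¹) * key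

lemma Dpow_swap (i : ℕ) (x : V) :
    ((Dm W) ^ i) (Dm W x) = Dm W (((Dm W) ^ i) x) := by
  rw [← Module.End.mul_apply, ← pow_succ, pow_succ', Module.End.mul_apply]

/-- The `k`-th relation for a central element. -/
def rel (W : VOA V) (u : V) (k : ℕ) : Prop :=
  ∀ (w : V) (J : ℕ), (∀ j : ℕ, J ≤ j → W.Y (j : ℤ) u w = 0) →
    (∑ i ∈ Finset.range J, cf k i • ((Dm W) ^ (i + 1)) (W.Y ((i : ℕ) : ℤ) u w))
      ∈ Submodule.span ℂ {W.vac}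

lemma rel_base (u : V) (hcen : ∀ v : V, W.Y (-1) u v = W.Y (-1) v u) : rel W u 0 := by
  intro w J hJ
  have hs := skewd W u w (-1)
  rw [negOnePow_neg_one] at hs
  have hsupp : (Function.support fun i : ℕ =>
      ((-1 : ℤ) ^ i) • W.Y (-1 - (i : ℤ)) (W.Y (-1 + i) u w) W.vac)
      ⊆ ↑(Finset.range (J + 1)) := by
    intro i hi
    simp only [Finset.coe_range, Set.mem_Iio]
    by_contra hc
    apply hi
    show ((-1 : ℤ) ^ i) • W.Y (-1 - (i : ℤ)) (W.Y (-1 + (i : ℤ)) u w) W.vac = 0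
    have e : (-1 + (i : ℤ)) = ((i - 1 : ℕ) : ℤ) := by omega
    rw [e, hJ (i - 1) (by omega)]
    simp
  rw [finsum_eq_sum_of_support_subset _ hsupp, Finset.sum_range_succ'] at hs
  have h0 : ((-1 : ℤ) ^ (0 : ℕ)) • W.Y (-1 - ((0 : ℕ) : ℤ)) (W.Y (-1 + ((0 : ℕ) : ℤ)) u w) W.vac
      = W.Y (-1) u w := by
    norm_num [W.creation]
  rw [h0, hcen w] at hs
  have hzero : (∑ i ∈ Finset.range J,
      ((-1 : ℤ) ^ (i + 1)) • W.Y (-1 - ((i + 1 : ℕ) : ℤ)) (W.Y (-1 + ((i + 1 : ℕ) : ℤ)) u w) W.vac)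
      = 0 := by
    have := hs
    have e : -(-1 : ℤ) • W.Y (-1) w u = W.Y (-1) w u := by norm_num
    rw [e] at this
    linear_combination (norm := abel) this
  have hcong : ∀ i ∈ Finset.range J,
      cf 0 i • ((Dm W) ^ (i + 1)) (W.Y ((i : ℕ) : ℤ) u w)
      = ((-1 : ℤ) ^ (i + 1)) • W.Y (-1 - ((i + 1 : ℕ) : ℤ)) (W.Y (-1 + ((i + 1 : ℕ) : ℤ)) u w)
          W.vac := by
    intro i _
    have e : (-1 + ((i + 1 : ℕ) : ℤ)) = ((i : ℕ) : ℤ) := by omega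
    rw [e, creation_pow W _ (i + 1)]
    rw [← Int.cast_smul_eq_zsmul ℂ, smul_smul]
    congr 1
    unfold cf
    have h1 : ((i + 1 : ℕ).factorial : ℂ) = (i.factorial : ℂ) * ((i : ℂ) + 1) := by
      rw [Nat.factorial_succ]; push_cast; ring
    rw [h1]
    have h2 : ((i : ℂ) + 1) ≠ 0 := by exact_mod_cast Nat.cast_add_one_ne_zero (R := ℂ) i
    have h3 : ((i.factorial : ℂ)) ≠ 0 := Nat.cast_ne_zero.mpr i.factorial_ne_zero
    push_cast
    field_simp
    ring
  rw [Finset.sum_congr rfl hcong, hzero]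
  exact Submodule.zero_mem _

lemma rel_step (hnontriv : (⊥ : Submodule ℂ V) ≠ ⊤)
    (hsimple : ∀ I : Submodule ℂ V,
      (∀ (a : V) (n : ℤ), ∀ x ∈ I, W.Y n a x ∈ I) → I = ⊥ ∨ I = ⊤)
    (u : V) (k : ℕ) (IH : rel W u k) : rel W u (k + 1) := by
  intro w J hJ
  have hJ' : ∀ j : ℕ, J + 1 ≤ j → W.Y (j : ℤ) u (Dm W w) = 0 := by
    intro j hj
    rw [commD W u w (j : ℤ), hJ j (by omega)]
    have e : ((j : ℤ) - 1) = ((j - 1 : ℕ) : ℤ) := by omega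
    rw [e, hJ (j - 1) (by omega)]
    simp
  have h1 := IH (Dm W w) (J + 1) hJ'
  -- rewrite the sum
  have hterm : ∀ i ∈ Finset.range (J + 1),
      cf k i • ((Dm W) ^ (i + 1)) (W.Y ((i : ℕ) : ℤ) u (Dm W w))
      = Dm W (cf k i • ((Dm W) ^ (i + 1)) (W.Y ((i : ℕ) : ℤ) u w))
        + (cf k i * (i : ℂ)) • ((Dm W) ^ (i + 1)) (W.Y (((i : ℕ) : ℤ) - 1) u w) := by
    intro i _
    rw [commD W u w ((i : ℕ) : ℤ), map_add, smul_add]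
    congr 1
    · rw [Dpow_swap, (Dm W).map_smul]
    · rw [← Int.cast_smul_eq_zsmul ℂ, map_smul, smul_smul]
      norm_num
  rw [Finset.sum_congr rfl hterm, Finset.sum_add_distrib] at h1
  -- first part is D of the k-th relation sum, hence 0 modulo span
  have hfirst : (∑ i ∈ Finset.range (J + 1),
      Dm W (cf k i • ((Dm W) ^ (i + 1)) (W.Y ((i : ℕ) : ℤ) u w))) = Dm W
      (∑ i ∈ Finset.range J, cf k i • ((Dm W) ^ (i + 1)) (W.Y ((i : ℕ) : ℤ) u w)) := by
    rw [← map_sum, Finset.sum_range_succ, hJ J le_rfl]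
    simp
  have hfirst0 : (∑ i ∈ Finset.range (J + 1),
      Dm W (cf k i • ((Dm W) ^ (i + 1)) (W.Y ((i : ℕ) : ℤ) u w))) = 0 := by
    rw [hfirst]
    obtain ⟨c, hc⟩ := Submodule.mem_span_singleton.mp (IH w J hJ)
    rw [← hc, map_smul, D_vac, smul_zero]
  rw [hfirst0, zero_add] at h1
  -- second part
  have hsecond : (∑ i ∈ Finset.range (J + 1),
      (cf k i * (i : ℂ)) • ((Dm W) ^ (i + 1)) (W.Y (((i : ℕ) : ℤ) - 1) u w))
      = Dm W (∑ t ∈ Finset.range J,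
        (cf k (t + 1) * ((t : ℂ) + 1)) • ((Dm W) ^ (t + 1)) (W.Y ((t : ℕ) : ℤ) u w)) := by
    rw [Finset.sum_range_succ']
    have hg0 : (cf k 0 * ((0 : ℕ) : ℂ)) • ((Dm W) ^ (0 + 1)) (W.Y (((0 : ℕ) : ℤ) - 1) u w)
        = 0 := by
      simp
    rw [hg0, add_zero, map_sum]
    apply Finset.sum_congr rfl
    intro t _
    have e : (((t + 1 : ℕ) : ℤ) - 1) = ((t : ℕ) : ℤ) := by omega
    rw [e, pow_succ', Module.End.mul_apply, map_smul]
    congr 1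
    push_cast
    ring
  rw [hsecond] at h1
  have hσ := D_mem_span W hnontriv hsimple _ h1
  have hfin : (∑ i ∈ Finset.range J,
      cf (k + 1) i • ((Dm W) ^ (i + 1)) (W.Y ((i : ℕ) : ℤ) u w))
      = -(∑ t ∈ Finset.range J,
        (cf k (t + 1) * ((t : ℂ) + 1)) • ((Dm W) ^ (t + 1)) (W.Y ((t : ℕ) : ℤ) u w)) := by
    rw [← Finset.sum_neg_distrib]
    apply Finset.sum_congr rfl
    intro t _
    rw [cf_rec k t, neg_smul, neg_neg]
  rw [hfin]
  exact Submodule.neg_mem _ hσ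

lemma modes_in_span (hnontriv : (⊥ : Submodule ℂ V) ≠ ⊤)
    (hsimple : ∀ I : Submodule ℂ V,
      (∀ (a : V) (n : ℤ), ∀ x ∈ I, W.Y n a x ∈ I) → I = ⊥ ∨ I = ⊤)
    (u : V) (hcen : ∀ v : V, W.Y (-1) u v = W.Y (-1) v u) (n : ℕ) (w : V) :
    W.Y ((n : ℕ) : ℤ) u w ∈ Submodule.span ℂ {W.vac} := by
  have hrel : ∀ k : ℕ, rel W u k := by
    intro k
    induction k with
    | zero => exact rel_base W u hcen
    | succ k ih => exact rel_step W hnontriv hsimple u k ih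
  obtain ⟨N, hN⟩ := W.trunc u w
  set J : ℕ := max N.toNat (n + 1) with hJdef
  have hJ : ∀ j : ℕ, J ≤ j → W.Y (j : ℤ) u w = 0 := by
    intro j hj
    apply hN
    have h1 : N.toNat ≤ j := le_trans (le_max_left _ _) hj
    omega
  have hχ := cauchy_mem (Submodule.span ℂ {W.vac})
    (fun j : Fin J => ((Dm W) ^ ((j : ℕ) + 1)) (W.Y (((j : ℕ) : ℕ) : ℤ) u w)) (fun k => by
      have h := hrel (k : ℕ) w J hJ
      rw [Finset.sum_range] at h
      exact h)
  have hn : n < J := by omega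
  have := hχ ⟨n, hn⟩
  exact pow_mem_span W hnontriv hsimple (n + 1) _ this

lemma center_in_span (hnontriv : (⊥ : Submodule ℂ V) ≠ ⊤)
    (hsimple : ∀ I : Submodule ℂ V,
      (∀ (a : V) (n : ℤ), ∀ x ∈ I, W.Y n a x ∈ I) → I = ⊥ ∨ I = ⊤)
    (u : V) (hcen : ∀ v : V, W.Y (-1) u v = W.Y (-1) v u) :
    u ∈ Submodule.span ℂ {W.vac} := by
  have hs := skewd W u W.omega 0
  have h2 : (∑ᶠ i : ℕ, ((-1 : ℤ) ^ i) • W.Y (-1 - (i : ℤ)) (W.Y (0 + i) u W.omega) W.vac)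
      = W.Y 0 u W.omega := by
    rw [finsum_eq_single _ 0 (fun i hi => by
      have e : ((0 : ℤ) + (i : ℤ)) = ((i : ℕ) : ℤ) := by omega
      rw [e]
      obtain ⟨c, hc⟩ := Submodule.mem_span_singleton.mp
        (modes_in_span W hnontriv hsimple u hcen i W.omega)
      rw [← hc, map_smul, LinearMap.smul_apply, W.vacuum, if_neg (by omega)]
      simp)]
    norm_num [W.creation]
  rw [h2] at hs
  have hD : Dm W u ∈ Submodule.span ℂ {W.vac} := by
    have e : Dm W u = -(W.Y 0 u W.omega) := by
      rw [hs]
      simp [Dm]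
    rw [e]
    exact Submodule.neg_mem _ (modes_in_span W hnontriv hsimple u hcen 0 W.omega)
  obtain ⟨c, hc⟩ := Submodule.mem_span_singleton.mp hD
  have hc0 : c = 0 := D_eq_smul_vac W hnontriv u c hc.symm
  rw [hc0] at hc
  simp only [zero_smul] at hc
  exact kerD_span W hnontriv hsimple u hc.symm

end Stmt13Aux

/-- for a simple vertex operator algebra `V`, the center of the
algebra `(V,*)`, `a*b = a₋₁b`, i.e. `{u : u₋₁v = v₋₁u for all v}`, is exactly
`ℂ·1`, the span of the vacuum vector. -/


theorem stmt13 {V : Type*} [AddCommGroup V] [Module ℂ V] (W : VOA V)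
    (hnontriv : (⊥ : Submodule ℂ V) ≠ ⊤)
    (hsimple : ∀ I : Submodule ℂ V,
      (∀ (a : V) (n : ℤ), ∀ x ∈ I, W.Y n a x ∈ I) → I = ⊥ ∨ I = ⊤) :
    {u : V | ∀ v : V, W.Y (-1) u v = W.Y (-1) v u}
      = (Submodule.span ℂ {W.vac} : Submodule ℂ V) := by
  ext u
  simp only [Set.mem_setOf_eq, SetLike.mem_coe]
  constructor
  · intro hcen
    exact Stmt13Aux.center_in_span W hnontriv hsimple u hcen
  · intro hu v
    obtain ⟨c, hc⟩ := Submodule.mem_span_singleton.mp hu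
    rw [← hc, map_smul, LinearMap.smul_apply, W.vacuum, if_pos rfl, map_smul, W.creation]
end

section
/- Let L be a positive definite even lattice. Then the set C_2(L) = { α ∈ L : ⟨α − β, β⟩ ≤ 0 for all β ∈ L } is finite. -/
/-- `C₂(L) = {α ∈ L : ⟨α - β, β⟩ ≤ 0 for all β ∈ L}` for a lattice `L` with
bilinear form `B`. -/
def C2Set {L : Type*} [AddCommGroup L] [Module ℤ L]
    (B : L →ₗ[ℤ] L →ₗ[ℤ] ℤ) : Set L :=
  {α : L | ∀ β : L, B (α - β) β ≤ 0}

/-- for a positive definite even lattice `L` (a free `ℤ`-module of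
finite rank with a symmetric, even, positive definite `ℤ`-valued bilinear form),
the set `C₂(L)` is finite. -/
theorem stmt14 {L : Type*} [AddCommGroup L] [Module ℤ L]
    [Module.Free ℤ L] [Module.Finite ℤ L]
    (B : L →ₗ[ℤ] L →ₗ[ℤ] ℤ)
    (hsymm : ∀ x y : L, B x y = B y x)
    (heven : ∀ x : L, Even (B x x))
    (hpos : ∀ x : L, x ≠ 0 → 0 < B x x) :
    (C2Set B).Finite := by
  classical
  let b := Module.Free.chooseBasis ℤ L
  set ι := Module.Free.ChooseBasisIndex ℤ L
  -- the coordinate map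
  set φ : L → ι → ℤ := fun α i => B α (b i) with hφ
  -- φ is injective
  have hinj : Function.Injective φ := by
    intro x y hxy
    have hzero : ∀ z : L, B (x - y) z = 0 := by
      intro z
      have : ∀ i : ι, B (x - y) (b i) = 0 := by
        intro i
        have := congrFun hxy i
        simp only [hφ] at this
        simp [map_sub, this]
      have hrepr := Module.Basis.sum_repr b z
      rw [← hrepr, map_sum]
      refine Finset.sum_eq_zero fun i _ => ?_
      rw [LinearMap.map_smul, this i, smul_zero]
    by_contra hne
    have : x - y ≠ 0 := sub_ne_zero.mpr hne
    have := hpos _ this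
    rw [hzero (x - y)] at this
    exact lt_irrefl 0 this
  -- bound on coordinates of elements of C₂
  have hbound : ∀ α ∈ C2Set B, ∀ i : ι, |B α (b i)| ≤ B (b i) (b i) := by
    intro α hα i
    have h1 := hα (b i)
    have h2 := hα (-(b i))
    simp only [map_sub, map_neg, sub_neg_eq_add, map_add, LinearMap.sub_apply,
      LinearMap.add_apply, LinearMap.neg_apply] at h1 h2
    rw [abs_le]
    constructor <;> linarith
  -- the image of C₂ under φ is contained in a finite set
  have hfin : (Set.univ.pi fun i : ι => Set.Icc (-(B (b i) (b i))) (B (b i) (b i))).Finite :=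
    Set.Finite.pi fun i => Set.finite_Icc _ _
  have hsub : φ '' C2Set B ⊆ Set.univ.pi fun i : ι =>
      Set.Icc (-(B (b i) (b i))) (B (b i) (b i)) := by
    rintro _ ⟨α, hα, rfl⟩ i _
    have := hbound α hα i
    rw [abs_le] at this
    exact ⟨this.1, this.2⟩
  have : (φ '' C2Set B).Finite := hfin.subset hsub
  exact Set.Finite.of_finite_image this (hinj.injOn)
end

section
/- Let L be a positive definite even lattice. Then C_2(L) = { α ∈ L : ⟨α − β, β⟩ ≤ 0 for all β ∈ L } spans L over ℤ, i.e. every element of L is a ℤ-linear combination of elements of C_2(L). -/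
/-- for a positive definite even lattice `L`, the set `C₂(L)`
spans `L` over `ℤ`: every element of `L` is a `ℤ`-linear combination of elements
of `C₂(L)`. -/
theorem stmt16 {L : Type*} [AddCommGroup L] [Module ℤ L]
    [Module.Free ℤ L] [Module.Finite ℤ L]
    (B : L →ₗ[ℤ] L →ₗ[ℤ] ℤ)
    (hsymm : ∀ x y : L, B x y = B y x)
    (heven : ∀ x : L, Even (B x x))
    (hpos : ∀ x : L, x ≠ 0 → 0 < B x x) :
    ∀ α : L, α ∈ Submodule.span ℤ (C2Set B) := by
  have key : ∀ n : ℕ, ∀ α : L, (B α α).toNat ≤ n →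
      α ∈ Submodule.span ℤ (C2Set B) := by
    intro n
    induction n with
    | zero =>
      intro α hα
      rcases eq_or_ne α 0 with rfl | hne
      · exact Submodule.zero_mem _
      · exfalso
        have := hpos α hne
        omega
    | succ n ih =>
      intro α hα
      by_cases hc : α ∈ C2Set B
      · exact Submodule.subset_span hc
      · simp only [C2Set, Set.mem_setOf_eq, not_forall, not_le] at hc
        obtain ⟨β, hβ⟩ := hc
        have hβne : β ≠ 0 := by
          rintro rfl; simp at hβ
        have hαβne : α - β ≠ 0 := by
          intro h
          rw [h] at hβ; simp at hβ
        have hid : B α α = B (α - β) (α - β) + 2 * B (α - β) β + B β β := by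
          have h1 := hsymm (α - β) β
          simp only [map_sub, LinearMap.sub_apply] at *
          ring_nf
          linarith
        have h1 := hpos β hβne
        have h2 := hpos (α - β) hαβne
        have hb : (B β β).toNat ≤ n := by omega
        have hab : (B (α - β) (α - β)).toNat ≤ n := by omega
        have := Submodule.add_mem _ (ih (α - β) hab) (ih β hb)
        simpa using this
  intro α
  rcases eq_or_ne α 0 with rfl | hne
  · exact Submodule.zero_mem _
  · exact key (B α α).toNat α le_rfl
end

section
/- Fix a positive integer k, and let B_k be the quotient of the polynomial algebra ℂ[X, Y, Z] by the relations X² = Y² = XZ = YZ = 0 and XY = Z^{2k}/(2k)!. Then the bracket determined by {Z, X} = 2kX, {Z, Y} = −2kY, {X, Y} = Z^{2k−1}/(2k−1)!, extended by the Leibniz rule, gives a well-defined Poisson algebra structure on B_k. -/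
open MvPolynomial

/-- The ideal of relations `X² = Y² = XZ = YZ = 0`, `XY = Z^{2k}/(2k)!` defining
`B_k` as a quotient of `ℂ[X,Y,Z]` (variables `0 ↦ X`, `1 ↦ Y`, `2 ↦ Z`). -/
noncomputable def relIdeal (k : ℕ) : Ideal (MvPolynomial (Fin 3) ℂ) :=
  Ideal.span {X 0 ^ 2, X 1 ^ 2, X 0 * X 2, X 1 * X 2,
    X 0 * X 1 - C ((1 : ℂ) / (2 * k).factorial) * X 2 ^ (2 * k)}

/-- The bracket on `ℂ[X,Y,Z]` determined by `{Z,X} = 2kX`, `{Z,Y} = -2kY`,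
`{X,Y} = Z^{2k-1}/(2k-1)!` and extended by the Leibniz rule (via partial
derivatives). -/
noncomputable def pBracket (k : ℕ) (f g : MvPolynomial (Fin 3) ℂ) :
    MvPolynomial (Fin 3) ℂ :=
  (pderiv 0 f * pderiv 1 g - pderiv 1 f * pderiv 0 g) *
      (C ((1 : ℂ) / (2 * k - 1).factorial) * X 2 ^ (2 * k - 1))
    + (pderiv 2 f * pderiv 0 g - pderiv 0 f * pderiv 2 g) * (C ((2 * k : ℕ) : ℂ) * X 0)
    + (pderiv 2 f * pderiv 1 g - pderiv 1 f * pderiv 2 g) * (- C ((2 * k : ℕ) : ℂ) * X 1)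

/-- Mixed partial derivatives commute. -/
lemma pd_comm' (i j : Fin 3) (f : MvPolynomial (Fin 3) ℂ) :
    pderiv i (pderiv j f) = pderiv j (pderiv i f) := by
  induction f using MvPolynomial.induction_on with
  | C a => simp
  | add p q hp hq => simp [hp, hq]
  | mul_X p n hp =>
      simp only [pderiv_mul, map_add, pderiv_X, Pi.single_apply, hp]
      split_ifs <;> simp <;> ring

set_option maxHeartbeats 1000000 in
/-- The bracket preserves the ideal of relations. -/
lemma pBracket_mem (k : ℕ) (hk : 0 < k) (f g : MvPolynomial (Fin 3) ℂ)
    (hf : f ∈ relIdeal k) : pBracket k f g ∈ relIdeal k := by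
  have m1 : X 0 ^ 2 ∈ relIdeal k := Ideal.subset_span (by simp)
  have m2 : (X 1 : MvPolynomial (Fin 3) ℂ) ^ 2 ∈ relIdeal k := Ideal.subset_span (by simp)
  have m3 : (X 0 : MvPolynomial (Fin 3) ℂ) * X 2 ∈ relIdeal k := Ideal.subset_span (by simp)
  have m4 : (X 1 : MvPolynomial (Fin 3) ℂ) * X 2 ∈ relIdeal k := Ideal.subset_span (by simp)
  have m5 : (X 0 : MvPolynomial (Fin 3) ℂ) * X 1
      - C ((1 : ℂ) / (2 * k).factorial) * X 2 ^ (2 * k) ∈ relIdeal k :=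
    Ideal.subset_span (by simp)
  have hpow1 : (X 2 : MvPolynomial (Fin 3) ℂ) ^ (2 * k) = X 2 ^ (2 * k - 1) * X 2 := by
    rw [← pow_succ]; congr 1; omega
  have hpow2 : (X 2 : MvPolynomial (Fin 3) ℂ) ^ (2 * k - 1) = X 2 ^ (2 * k - 2) * X 2 := by
    rw [← pow_succ]; congr 1; omega
  have hc : (C ((1 : ℂ) / (2 * k - 1).factorial) : MvPolynomial (Fin 3) ℂ) =
      C ((2 * k : ℕ) : ℂ) * C ((1 : ℂ) / (2 * k).factorial) := by
    rw [← C_mul]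
    congr 1
    have h1 := Nat.factorial_succ (2 * k - 1)
    rw [show 2 * k - 1 + 1 = 2 * k from by omega] at h1
    rw [h1]
    have h2 : (2 * (k : ℂ)) ≠ 0 := mul_ne_zero two_ne_zero (Nat.cast_ne_zero.mpr hk.ne')
    have h3 : (((2 * k - 1).factorial : ℕ) : ℂ) ≠ 0 :=
      Nat.cast_ne_zero.mpr (Nat.factorial_ne_zero _)
    push_cast
    field_simp
    exact (div_self (Nat.cast_ne_zero.mpr hk.ne')).symm
  have key : ∀ r ∈ ({X 0 ^ 2, X 1 ^ 2, X 0 * X 2, X 1 * X 2,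
      X 0 * X 1 - C ((1 : ℂ) / (2 * k).factorial) * X 2 ^ (2 * k)} :
        Set (MvPolynomial (Fin 3) ℂ)), ∀ g, pBracket k r g ∈ relIdeal k := by
    intro r hr g
    have hpd : ∀ (i j : Fin 3), i ≠ j → pderiv j (X i : MvPolynomial (Fin 3) ℂ) = 0 :=
      fun i j h => pderiv_X_of_ne h
    simp only [Set.mem_insert_iff, Set.mem_singleton_iff] at hr
    rcases hr with rfl | rfl | rfl | rfl | rfl
    · have eq1 : pBracket k (X 0 ^ 2) g =
          (C ((1 : ℂ) / (2 * k - 1).factorial) * (2 * pderiv 1 g) * X 2 ^ (2 * k - 2))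
              * (X 0 * X 2)
          - (C ((2 * k : ℕ) : ℂ) * (2 * pderiv 2 g)) * (X 0 ^ 2) := by
        simp only [pBracket, pderiv_pow, pderiv_X_self,
          hpd 0 1 (by decide), hpd 0 2 (by decide), hpow2]
        push_cast
        ring
      rw [eq1]
      exact sub_mem (Ideal.mul_mem_left _ _ m3) (Ideal.mul_mem_left _ _ m1)
    · have eq1 : pBracket k (X 1 ^ 2) g =
          (- C ((1 : ℂ) / (2 * k - 1).factorial) * (2 * pderiv 0 g) * X 2 ^ (2 * k - 2))
              * (X 1 * X 2)
          + (C ((2 * k : ℕ) : ℂ) * (2 * pderiv 2 g)) * (X 1 ^ 2) := by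
        simp only [pBracket, pderiv_pow, pderiv_X_self,
          hpd 1 0 (by decide), hpd 1 2 (by decide), hpow2]
        push_cast
        ring
      rw [eq1]
      exact add_mem (Ideal.mul_mem_left _ _ m4) (Ideal.mul_mem_left _ _ m2)
    · have eq1 : pBracket k (X 0 * X 2) g =
          (C ((2 * k : ℕ) : ℂ) * pderiv 0 g) * (X 0 ^ 2)
          - (C ((2 * k : ℕ) : ℂ) * pderiv 1 g) *
              (X 0 * X 1 - C ((1 : ℂ) / (2 * k).factorial) * X 2 ^ (2 * k))
          - (C ((2 * k : ℕ) : ℂ) * pderiv 2 g) * (X 0 * X 2) := by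
        simp only [pBracket, pderiv_mul, pderiv_X_self,
          hpd 0 1 (by decide), hpd 0 2 (by decide), hpd 2 0 (by decide), hpd 2 1 (by decide),
          hc, hpow1]
        ring
      rw [eq1]
      exact sub_mem (sub_mem (Ideal.mul_mem_left _ _ m1) (Ideal.mul_mem_left _ _ m5))
        (Ideal.mul_mem_left _ _ m3)
    · have eq1 : pBracket k (X 1 * X 2) g =
          (C ((2 * k : ℕ) : ℂ) * pderiv 0 g) *
              (X 0 * X 1 - C ((1 : ℂ) / (2 * k).factorial) * X 2 ^ (2 * k))
          - (C ((2 * k : ℕ) : ℂ) * pderiv 1 g) * (X 1 ^ 2)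
          + (C ((2 * k : ℕ) : ℂ) * pderiv 2 g) * (X 1 * X 2) := by
        simp only [pBracket, pderiv_mul, pderiv_X_self,
          hpd 1 0 (by decide), hpd 1 2 (by decide), hpd 2 0 (by decide), hpd 2 1 (by decide),
          hc, hpow1]
        ring
      rw [eq1]
      exact add_mem (sub_mem (Ideal.mul_mem_left _ _ m5) (Ideal.mul_mem_left _ _ m2))
        (Ideal.mul_mem_left _ _ m4)
    · have eq1 : pBracket k (X 0 * X 1 - C ((1 : ℂ) / (2 * k).factorial) * X 2 ^ (2 * k)) g =
          (- (C ((1 : ℂ) / (2 * k - 1).factorial)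
              + C ((2 * k : ℕ) : ℂ) * C ((1 : ℂ) / (2 * k - 1).factorial))
            * pderiv 0 g * X 2 ^ (2 * k - 2)) * (X 0 * X 2)
          + ((C ((1 : ℂ) / (2 * k - 1).factorial)
              + C ((2 * k : ℕ) : ℂ) * C ((1 : ℂ) / (2 * k - 1).factorial))
            * pderiv 1 g * X 2 ^ (2 * k - 2)) * (X 1 * X 2) := by
        have hpow3 : (X 2 : MvPolynomial (Fin 3) ℂ) ^ (2 * k) =
            X 2 ^ (2 * k - 2) * X 2 * X 2 := by rw [← hpow2, ← hpow1]
        simp only [pBracket, pderiv_mul, map_sub, pderiv_pow, pderiv_C_mul, pderiv_C,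
          pderiv_X_self, ← C_eq_coe_nat, hc,
          hpd 0 1 (by decide), hpd 0 2 (by decide), hpd 1 0 (by decide), hpd 1 2 (by decide),
          hpd 2 0 (by decide), hpd 2 1 (by decide)]
        rw [show (X 2 : MvPolynomial (Fin 3) ℂ) ^ (2 * k - 1) = X 2 ^ (2 * k - 2) * X 2
          from hpow2, hpow3]
        push_cast
        ring
      rw [eq1]
      exact add_mem (Ideal.mul_mem_left _ _ m3) (Ideal.mul_mem_left _ _ m4)
  refine Submodule.span_induction (fun r hr => key r hr g) (by simp [pBracket]) ?_ ?_ hf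
  · intro a b _ _ ha hb
    have : pBracket k (a + b) g = pBracket k a g + pBracket k b g := by
      simp only [pBracket, map_add]; ring
    rw [this]; exact add_mem ha hb
  · intro r a haI ha
    have : pBracket k (r • a) g = r * pBracket k a g + a * pBracket k r g := by
      simp only [pBracket, smul_eq_mul, pderiv_mul]; ring
    rw [this]
    exact add_mem (Ideal.mul_mem_left _ _ ha) (Ideal.mul_mem_right _ _ haI)

set_option maxHeartbeats 1000000 in
/-- for a positive integer `k`, the bracket determined by
`{Z,X} = 2kX`, `{Z,Y} = -2kY`, `{X,Y} = Z^{2k-1}/(2k-1)!`, extended by the Leibniz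
rule, gives a well-defined Poisson algebra structure on the quotient
`B_k = ℂ[X,Y,Z]/(X², Y², XZ, YZ, XY - Z^{2k}/(2k)!)`: it preserves the ideal of
relations, and is skew-symmetric, satisfies the Jacobi identity and the Leibniz
rule. -/
theorem stmt19 (k : ℕ) (hk : 0 < k) :
    (∀ f g : MvPolynomial (Fin 3) ℂ, f ∈ relIdeal k → pBracket k f g ∈ relIdeal k) ∧
    (∀ f g : MvPolynomial (Fin 3) ℂ, pBracket k f g = - pBracket k g f) ∧
    (∀ f g h : MvPolynomial (Fin 3) ℂ,
      pBracket k f (g * h) = pBracket k f g * h + pBracket k f h * g) ∧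
    (∀ f g h : MvPolynomial (Fin 3) ℂ,
      pBracket k f (pBracket k g h) + pBracket k g (pBracket k h f)
        + pBracket k h (pBracket k f g) = 0) := by
  refine ⟨fun f g hf => pBracket_mem k hk f g hf, ?_, ?_, ?_⟩
  · intro f g
    unfold pBracket; ring
  · intro f g h
    simp only [pBracket, pderiv_mul]; ring
  · intro f g h
    simp only [pBracket, map_add, map_sub, map_neg, pderiv_mul, pderiv_C, pderiv_pow,
      pderiv_X_self, pderiv_X_of_ne (show (0:Fin 3) ≠ 2 by decide),
      pderiv_X_of_ne (show (1:Fin 3) ≠ 2 by decide),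
      pderiv_X_of_ne (show (0:Fin 3) ≠ 1 by decide),
      pderiv_X_of_ne (show (1:Fin 3) ≠ 0 by decide),
      pderiv_X_of_ne (show (2:Fin 3) ≠ 0 by decide),
      pderiv_X_of_ne (show (2:Fin 3) ≠ 1 by decide),
      mul_zero, zero_mul, mul_one, add_zero, zero_add, neg_zero, sub_zero, zero_sub,
      pd_comm' 1 0, pd_comm' 2 0, pd_comm' 2 1]
    ring
end
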